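/- For differentiable u, v : ℝ⁴ × (0,∞) → ℝ (coordinates (x₁,y₁,x₂,y₂,t)), define {u,v} = (cos(x₂)/t)(∂_{x₁}u·∂_{y₁}v − ∂_{y₁}u·∂_{x₁}v) + e^{y₂}·y₁·(∂_t u·∂_{x₁}v − ∂_{x₁}u·∂_t v) + e^{y₂}·x₁·(∂_t u·∂_{y₁}v − ∂_{y₁}u·∂_t v). Let C(x₁,y₁,x₂,y₂,t) := cos(x₂)·log(t) − (e^{y₂}/2)·(x₁² − y₁²). Then for every differentiable g and every point with t > 0, {C, g} = 0. -/

import Mathlib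

/-- Partial derivative in the coordinate `x₁` of `(x₁,y₁,x₂,y₂,t) ∈ ℝ⁵`. -/
noncomputable def pdx1 (u : ℝ × ℝ × ℝ × ℝ × ℝ → ℝ) (P : ℝ × ℝ × ℝ × ℝ × ℝ) : ℝ :=
  deriv (fun s => u (s, P.2.1, P.2.2.1, P.2.2.2.1, P.2.2.2.2)) P.1

/-- Partial derivative in the coordinate `y₁`. -/
noncomputable def pdy1 (u : ℝ × ℝ × ℝ × ℝ × ℝ → ℝ) (P : ℝ × ℝ × ℝ × ℝ × ℝ) : ℝ :=
  deriv (fun s => u (P.1, s, P.2.2.1, P.2.2.2.1, P.2.2.2.2)) P.2.1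

/-- Partial derivative in the coordinate `t`. -/
noncomputable def pdt (u : ℝ × ℝ × ℝ × ℝ × ℝ → ℝ) (P : ℝ × ℝ × ℝ × ℝ × ℝ) : ℝ :=
  deriv (fun s => u (P.1, P.2.1, P.2.2.1, P.2.2.2.1, s)) P.2.2.2.2

/-- The Poissonization of the 4D Jacobi structure
`Λ = cos(x₂) ∂_{x₁} ∧ ∂_{y₁}`, `E = e^{y₂}(y₁ ∂_{x₁} + x₁ ∂_{y₁})` on
coordinates `(x₁,y₁,x₂,y₂,t)`, `t > 0`. -/
noncomputable def br4D (u v : ℝ × ℝ × ℝ × ℝ × ℝ → ℝ) (P : ℝ × ℝ × ℝ × ℝ × ℝ) : ℝ :=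
  (Real.cos P.2.2.1 / P.2.2.2.2) * (pdx1 u P * pdy1 v P - pdy1 u P * pdx1 v P)
  + Real.exp P.2.2.2.1 * P.2.1 * (pdt u P * pdx1 v P - pdx1 u P * pdt v P)
  + Real.exp P.2.2.2.1 * P.1 * (pdt u P * pdy1 v P - pdy1 u P * pdt v P)

/-- The Casimir candidate `C = cos(x₂)·log t − (e^{y₂}/2)(x₁² − y₁²)`. -/
noncomputable def casimir4D (P : ℝ × ℝ × ℝ × ℝ × ℝ) : ℝ :=
  Real.cos P.2.2.1 * Real.log P.2.2.2.2
    - (Real.exp P.2.2.2.1 / 2) * (P.1 ^ 2 - P.2.1 ^ 2)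

lemma pdx1_casimir4D (P : ℝ × ℝ × ℝ × ℝ × ℝ) :
    pdx1 casimir4D P = -(Real.exp P.2.2.2.1 * P.1) := by
  have h := (((hasDerivAt_pow 2 P.1).sub_const (P.2.1 ^ 2)).const_mul
    (Real.exp P.2.2.2.1 / 2)).const_sub (Real.cos P.2.2.1 * Real.log P.2.2.2.2)
  simp only [pdx1, casimir4D]
  rw [h.deriv]
  ring

lemma pdy1_casimir4D (P : ℝ × ℝ × ℝ × ℝ × ℝ) :
    pdy1 casimir4D P = Real.exp P.2.2.2.1 * P.2.1 := by
  have h := (((hasDerivAt_pow 2 P.2.1).const_sub (P.1 ^ 2)).const_mul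
    (Real.exp P.2.2.2.1 / 2)).const_sub (Real.cos P.2.2.1 * Real.log P.2.2.2.2)
  simp only [pdy1, casimir4D]
  rw [h.deriv]
  ring

lemma pdt_casimir4D (P : ℝ × ℝ × ℝ × ℝ × ℝ) (ht : P.2.2.2.2 ≠ 0) :
    pdt casimir4D P = Real.cos P.2.2.1 / P.2.2.2.2 := by
  have h := ((Real.hasDerivAt_log ht).const_mul (Real.cos P.2.2.1)).sub_const
    (Real.exp P.2.2.2.1 / 2 * (P.1 ^ 2 - P.2.1 ^ 2))
  simp only [pdt, casimir4D]
  rw [h.deriv]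
  ring

/-- The bracket `{u, v}` is the derivative of `v` along the Hamiltonian vector field of `u`. -/
lemma br4D_eq_hamiltonian (u v : ℝ × ℝ × ℝ × ℝ × ℝ → ℝ) (P : ℝ × ℝ × ℝ × ℝ × ℝ) :
    br4D u v P =
      (Real.exp P.2.2.2.1 * P.2.1 * pdt u P - Real.cos P.2.2.1 / P.2.2.2.2 * pdy1 u P) * pdx1 v P
      + (Real.cos P.2.2.1 / P.2.2.2.2 * pdx1 u P + Real.exp P.2.2.2.1 * P.1 * pdt u P) * pdy1 v P
      - Real.exp P.2.2.2.1 * (P.2.1 * pdx1 u P + P.1 * pdy1 u P) * pdt v P := by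
  rw [br4D]
  ring

theorem stmt_14_general (g : ℝ × ℝ × ℝ × ℝ × ℝ → ℝ) :
    ∀ P : ℝ × ℝ × ℝ × ℝ × ℝ, 0 < P.2.2.2.2 → br4D casimir4D g P = 0 := by
  intro P ht
  rw [br4D_eq_hamiltonian, pdx1_casimir4D, pdy1_casimir4D, pdt_casimir4D P ht.ne']
  ring

/-- `C = cos(x₂) log t − (e^{y₂}/2)(x₁² − y₁²)` is a Casimir of the
Poissonized 4D Jacobi structure. -/
theorem stmt_14 (g : ℝ × ℝ × ℝ × ℝ × ℝ → ℝ)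
    (hg : ∀ P : ℝ × ℝ × ℝ × ℝ × ℝ, 0 < P.2.2.2.2 → DifferentiableAt ℝ g P) :
    ∀ P : ℝ × ℝ × ℝ × ℝ × ℝ, 0 < P.2.2.2.2 → br4D casimir4D g P = 0 :=
  stmt_14_general g
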